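/- arXiv:0712.3650 — 2 statements merged into one kernel-verified Lean document; each statement's English description precedes it below -/
import Mathlib

section
/- For all real t ≠ 0, sinh(t)/t ≤ exp(t²/6); equivalently, the moment generating function of a uniform random variable on [-1,1] is at most exp(t²σ²/2) where σ² = 1/3. -/
/-! Both sides are even power series in `t` with nonnegative coefficients: `sinh t / t` has
coefficients `1 / (2n+1)!` and `exp (t² / 6)` has `1 / (6ⁿ n!)`, and `6ⁿ n! ≤ (2n+1)!` because
passing from `n` to `n + 1` multiplies the left side by `6(n+1)` and the right by
`(2n+2)(2n+3) ≥ 6(n+1)`. -/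

open Nat

theorem six_pow_mul_factorial_le_factorial_two_mul_add_one (n : ℕ) :
    6 ^ n * n ! ≤ (2 * n + 1)! := by
  induction n with
  | zero => simp
  | succ n ih =>
    calc 6 ^ (n + 1) * (n + 1)! = 6 * (n + 1) * (6 ^ n * n !) := by
          rw [pow_succ, factorial_succ]; ring
      _ ≤ (2 * n + 3) * (2 * n + 2) * (2 * n + 1)! := Nat.mul_le_mul (by nlinarith) ih
      _ = (2 * (n + 1) + 1)! := by
          rw [show 2 * (n + 1) + 1 = 2 * n + 2 + 1 by ring, factorial_succ (2 * n + 2),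
            factorial_succ (2 * n + 1)]
          ring

theorem Real.hasSum_sinh_div_self {t : ℝ} (ht : t ≠ 0) :
    HasSum (fun n : ℕ => (t ^ 2) ^ n / (2 * n + 1)!) (sinh t / t) := by
  refine ((hasSum_sinh t).div_const t).congr_fun fun n => ?_
  rw [← pow_mul, pow_succ]
  field_simp

theorem pow_div_factorial_two_mul_add_one_le {x : ℝ} (hx : 0 ≤ x) (n : ℕ) :
    x ^ n / (2 * n + 1)! ≤ (x / 6) ^ n / n ! := by
  rw [div_pow, div_div]
  gcongr
  exact_mod_cast six_pow_mul_factorial_le_factorial_two_mul_add_one n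

theorem stmt_3 (t : ℝ) (ht : t ≠ 0) : Real.sinh t / t ≤ Real.exp (t ^ 2 / 6) := by
  have hexp : HasSum (fun n : ℕ => (t ^ 2 / 6) ^ n / n !) (Real.exp (t ^ 2 / 6)) := by
    rw [Real.exp_eq_exp_ℝ]
    exact NormedSpace.expSeries_div_hasSum_exp _
  exact hasSum_le (pow_div_factorial_two_mul_add_one_le (sq_nonneg t))
    (Real.hasSum_sinh_div_self ht) hexp
end

section
/- Let X be a random variable with E[X] = 0, Var(X) = 1, and moment generating function φ(t) = E[exp(tX)] satisfying φ(t) ≤ exp(t²/2) for all real t. Let X₁,…,X_k be i.i.d. copies of X, let x ∈ ℝ^k with Σ x_j² = 1, and let S = Σ_j x_j X_j. Then for all 0 ≤ t < 1/2, E[exp(t S²)] ≤ 1/√(1-2t). -/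
/-!
Write `exp (t y²) = E[exp (√(2t) y Z)]` for a standard Gaussian `Z`. Taking `y = S`, exchanging the
two expectations and bounding the moment generating function of `S` by `exp (s² / 2)` (independence
and `∑ xⱼ² = 1`) gives `E[exp (t S²)] ≤ E[exp (t Z²)] = (1 - 2t)^(-1/2)`. The mixing step needs all
exponential moments of `S`; they follow from the integrability of `exp (t S²)` by completing the
square, and without that integrability the left-hand side is `0`.
-/

open MeasureTheory ProbabilityTheory Finset Real
open scoped NNReal ENNReal

namespace ProbabilityTheory

variable {Ω : Type*} [MeasurableSpace Ω] {μ : Measure Ω}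

lemma lintegral_exp_mul_gaussianReal (m : ℝ) (v : ℝ≥0) (a : ℝ) :
    ∫⁻ z, ENNReal.ofReal (exp (a * z)) ∂gaussianReal m v
      = ENNReal.ofReal (exp (m * a + v * a ^ 2 / 2)) := by
  rw [← ofReal_integral_eq_lintegral_ofReal (integrable_exp_mul_gaussianReal a)
    (ae_of_all _ fun z => (exp_pos _).le)]
  exact congrArg ENNReal.ofReal (congrFun mgf_fun_id_gaussianReal a)

lemma lintegral_exp_mul_sq_gaussianReal {t : ℝ} (ht : t < 1 / 2) :
    ∫⁻ z, ENNReal.ofReal (exp (t * z ^ 2)) ∂gaussianReal 0 1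
      = ENNReal.ofReal (1 / √(1 - 2 * t)) := by
  have hb : 0 < (1 - 2 * t) / 2 := by linarith
  have hdensity : ∀ z : ℝ, gaussianPDF 0 1 z * ENNReal.ofReal (exp (t * z ^ 2))
      = ENNReal.ofReal ((√(2 * π))⁻¹ * exp (-((1 - 2 * t) / 2) * z ^ 2)) := by
    intro z
    rw [gaussianPDF_def, gaussianPDFReal_def, ← ENNReal.ofReal_mul (by positivity), mul_assoc,
      ← exp_add]
    congr 3
    · simp
    · push_cast; ring
  rw [gaussianReal_of_var_ne_zero 0 one_ne_zero,
    lintegral_withDensity_eq_lintegral_mul _ (measurable_gaussianPDF 0 1) (by fun_prop)]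
  simp only [Pi.mul_apply, hdensity]
  rw [← ofReal_integral_eq_lintegral_ofReal ((integrable_exp_neg_mul_sq hb).const_mul _)
    (ae_of_all _ fun z => by positivity), integral_const_mul, integral_gaussian]
  congr 1
  have h2t : 0 < 1 - 2 * t := by linarith
  rw [show π / ((1 - 2 * t) / 2) = 2 * π / (1 - 2 * t) by field_simp,
    sqrt_div (by positivity)]
  have : √(2 * π) ≠ 0 := by positivity
  field_simp

lemma integrable_exp_mul_of_integrable_exp_mul_sq {Y : Ω → ℝ} {t : ℝ} (ht : 0 < t)
    (hY : AEMeasurable Y μ) (h : Integrable (fun ω => exp (t * Y ω ^ 2)) μ) (s : ℝ) :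
    Integrable (fun ω => exp (s * Y ω)) μ := by
  refine (h.const_mul (exp (s ^ 2 / (4 * t)))).mono' (hY.const_mul s).exp.aestronglyMeasurable
    (ae_of_all _ fun ω => ?_)
  rw [norm_of_nonneg (exp_pos _).le, ← exp_add, exp_le_exp, ← sub_nonneg]
  have : s ^ 2 / (4 * t) + t * Y ω ^ 2 - s * Y ω = (2 * t * Y ω - s) ^ 2 / (4 * t) := by
    field_simp; ring
  rw [this]
  positivity

lemma iIndepFun.mgf_sum_mul_le {ι : Type*} [Fintype ι] {X : ι → Ω → ℝ}
    (h_indep : iIndepFun X μ) (h_meas : ∀ i, AEMeasurable (X i) μ)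
    {c : ι → ℝ} (h_mgf : ∀ i s, mgf (X i) μ s ≤ exp (c i * s ^ 2 / 2)) (a : ι → ℝ) (s : ℝ) :
    mgf (fun ω => ∑ i, a i * X i ω) μ s ≤ exp ((∑ i, c i * a i ^ 2) * s ^ 2 / 2) := by
  have h_indep' : iIndepFun (fun i ω => a i * X i ω) μ :=
    h_indep.comp (fun i v => a i * v) (fun i => measurable_const_mul _)
  have hsum : (fun ω => ∑ i, a i * X i ω) = ∑ i, fun ω => a i * X i ω := by
    ext ω; simp [Finset.sum_apply]
  rw [hsum, h_indep'.mgf_sum₀ (fun i => (h_meas i).const_mul _), Finset.sum_mul, Finset.sum_div,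
    exp_sum]
  refine Finset.prod_le_prod (fun i _ => mgf_nonneg) fun i _ => ?_
  rw [mgf_const_mul]
  exact (h_mgf i _).trans_eq (by ring_nf)

theorem HasSubgaussianMGF.integral_exp_mul_sq_le {S : Ω → ℝ} {c : ℝ≥0}
    (h : HasSubgaussianMGF S c μ) {t : ℝ} (ht0 : 0 ≤ t) (ht : c * t < 1 / 2) :
    ∫ ω, exp (t * S ω ^ 2) ∂μ ≤ 1 / √(1 - 2 * (c * t)) := by
  have : IsFiniteMeasure μ :=
    (integrable_const_iff_isFiniteMeasure one_ne_zero).1 (by simpa using h.integrable_exp_mul 0)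
  set b := √(2 * t)
  have hb : b ^ 2 = 2 * t := sq_sqrt (by linarith)
  -- `exp (t y²)` is the moment generating function of a standard Gaussian at `b y`
  have hmix : ∀ y : ℝ, ENNReal.ofReal (exp (t * y ^ 2))
      = ∫⁻ z, ENNReal.ofReal (exp (b * y * z)) ∂gaussianReal 0 1 := by
    intro y
    rw [lintegral_exp_mul_gaussianReal, mul_pow, hb]
    congr 2
    simp; ring
  have hmeas : AEMeasurable (Function.uncurry fun ω z => ENNReal.ofReal (exp (b * S ω * z)))
      (μ.prod (gaussianReal 0 1)) :=
    ((h.aemeasurable.comp_fst.const_mul b).mul measurable_snd.aemeasurable).exp.ennreal_ofReal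
  have hlint : ∫⁻ ω, ENNReal.ofReal (exp (t * S ω ^ 2)) ∂μ
      ≤ ENNReal.ofReal (1 / √(1 - 2 * (c * t))) := calc
    ∫⁻ ω, ENNReal.ofReal (exp (t * S ω ^ 2)) ∂μ
        = ∫⁻ z, ∫⁻ ω, ENNReal.ofReal (exp (b * S ω * z)) ∂μ ∂gaussianReal 0 1 := by
      simp_rw [hmix]
      exact lintegral_lintegral_swap hmeas
    _ = ∫⁻ z, ENNReal.ofReal (mgf S μ (b * z)) ∂gaussianReal 0 1 := by
      refine lintegral_congr fun z => ?_
      rw [mgf, ofReal_integral_eq_lintegral_ofReal (h.integrable_exp_mul _)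
        (ae_of_all _ fun ω => (exp_pos _).le)]
      simp_rw [mul_right_comm b]
    _ ≤ ∫⁻ z, ENNReal.ofReal (exp (c * t * z ^ 2)) ∂gaussianReal 0 1 := by
      refine lintegral_mono fun z => ENNReal.ofReal_le_ofReal ((h.mgf_le _).trans_eq ?_)
      rw [mul_pow, hb]
      ring_nf
    _ = ENNReal.ofReal (1 / √(1 - 2 * (c * t))) := lintegral_exp_mul_sq_gaussianReal ht
  rw [integral_eq_lintegral_of_nonneg_ae (ae_of_all _ fun ω => (exp_pos _).le)
    ((h.aemeasurable.pow_const 2).const_mul t).exp.aestronglyMeasurable]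
  exact ENNReal.toReal_le_of_le_ofReal (by positivity) hlint

end ProbabilityTheory

theorem stmt_8_general {Ω : Type*} [MeasurableSpace Ω] (μ : Measure Ω) [IsProbabilityMeasure μ]
    (k : ℕ) (ξ : Ω → ℝ) (X : Fin k → Ω → ℝ)
    (hindep : iIndepFun X μ)
    (hid : ∀ j, IdentDistrib (X j) ξ μ μ)
    (hmgf : ∀ t : ℝ, mgf ξ μ t ≤ Real.exp (t ^ 2 / 2))
    (x : Fin k → ℝ) (hx : ∑ j, x j ^ 2 = 1)
    (t : ℝ) (ht0 : 0 ≤ t) (ht : t < 1 / 2) :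
    ∫ ω, Real.exp (t * (∑ j, x j * X j ω) ^ 2) ∂μ ≤ 1 / Real.sqrt (1 - 2 * t) := by
  set S := fun ω => ∑ j, x j * X j ω
  have hmeas : ∀ j, AEMeasurable (X j) μ := fun j => (hid j).aemeasurable_fst
  have hS_mgf : ∀ s, mgf S μ s ≤ exp ((1 : ℝ≥0) * s ^ 2 / 2) := fun s => by
    simpa [hx] using hindep.mgf_sum_mul_le hmeas (c := 1)
      (fun j s => by simpa [mgf_congr_of_identDistrib _ _ (hid j)] using hmgf s) x s
  rcases ht0.eq_or_lt with rfl | htpos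
  · simp
  by_cases hint : Integrable (fun ω => exp (t * S ω ^ 2)) μ
  · have hS : HasSubgaussianMGF S 1 μ := ⟨integrable_exp_mul_of_integrable_exp_mul_sq htpos
      (by fun_prop) hint, hS_mgf⟩
    simpa using hS.integral_exp_mul_sq_le ht0 (by simpa using ht)
  · rw [integral_undef hint]
    positivity

theorem stmt_8 {Ω : Type*} [MeasurableSpace Ω] (μ : Measure Ω) [IsProbabilityMeasure μ]
    (k : ℕ) (ξ : Ω → ℝ) (X : Fin k → Ω → ℝ)
    (hmeas : ∀ j, Measurable (X j))
    (hindep : iIndepFun X μ)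
    (hid : ∀ j, IdentDistrib (X j) ξ μ μ)
    (hmean : ∫ ω, ξ ω ∂μ = 0) (hvar : variance ξ μ = 1)
    (hmgf : ∀ t : ℝ, mgf ξ μ t ≤ Real.exp (t ^ 2 / 2))
    (x : Fin k → ℝ) (hx : ∑ j, x j ^ 2 = 1)
    (t : ℝ) (ht0 : 0 ≤ t) (ht : t < 1 / 2) :
    ∫ ω, Real.exp (t * (∑ j, x j * X j ω) ^ 2) ∂μ ≤ 1 / Real.sqrt (1 - 2 * t) :=
  stmt_8_general μ k ξ X hindep hid hmgf x hx t ht0 ht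
end
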